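/- In the axially symmetric case a = b, for all m, a, c > 0 and every r ∈ ℝ³, one has the determinant identity det(𝕀 + m(‖r‖² I₃ − r rᵀ)) = (m(a²+c²)/5 + m‖r‖²) · ((2/25)m²a²(a²+c²) + m⟨r, 𝕀r⟩), where ⟨·,·⟩ is the euclidean inner product. (This identity relates the two expressions for the invariant measure of the axisymmetric rolling ellipsoid, d γ ∧ dK and dγ ∧ dΩ.) -/
import Mathlib


open Matrix

/-- Inertia tensor of the homogeneous ellipsoid of mass `m` with semi-axes `a, a, c`. -/
noncomputable def inertiaTensorSym (a c m : ℝ) : Matrix (Fin 3) (Fin 3) ℝ :=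
  (m / 5) • Matrix.diagonal ![a ^ 2 + c ^ 2, a ^ 2 + c ^ 2, 2 * a ^ 2]

set_option maxHeartbeats 2000000 in
/-- In the axially symmetric case `a = b`, the determinant identity
`det(𝕀 + m(‖r‖² I₃ − r rᵀ)) = (m(a²+c²)/5 + m‖r‖²)·((2/25)m²a²(a²+c²) + m⟨r, 𝕀r⟩)`,
relating the two expressions for the invariant measure of the axisymmetric rolling
ellipsoid. -/
theorem det_inertia_plus_contact_axisymmetric (a c m : ℝ) (ha : 0 < a) (hc : 0 < c)
    (hm : 0 < m) (r : Fin 3 → ℝ) :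
    (inertiaTensorSym a c m +
        m • ((r ⬝ᵥ r) • (1 : Matrix (Fin 3) (Fin 3) ℝ) - vecMulVec r r)).det =
      (m * (a ^ 2 + c ^ 2) / 5 + m * (r ⬝ᵥ r)) *
        ((2 / 25) * m ^ 2 * a ^ 2 * (a ^ 2 + c ^ 2) +
          m * (r ⬝ᵥ (inertiaTensorSym a c m).mulVec r)) := by
  simp only [inertiaTensorSym, det_fin_three, dotProduct, mulVec, Fin.sum_univ_three,
    Matrix.add_apply, Matrix.smul_apply, Matrix.sub_apply, Matrix.one_apply,
    Matrix.diagonal_apply, vecMulVec_apply, Matrix.cons_val_zero, Matrix.cons_val_one,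
    Matrix.head_cons, Matrix.head_fin_const, Matrix.cons_val_two, Matrix.tail_cons,
    Fin.ext_iff, Fin.val_zero, Fin.val_one, Fin.val_two, smul_eq_mul]
  norm_num
  ring
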